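/- arXiv:2006.00611 — 4 statements merged into one kernel-verified Lean document; each statement's English description precedes it below -/
import Mathlib

section
/- Let k ≥ 1 and let h : ℝ × ℝᵏ × ℝ → ℝᵏ be the Sontag-type feedback defined by: h(a,b,c) = 0 if b = 0; h(a,b,c) = -(b/‖b‖²)·(a + √(a² + ‖b‖⁴)) if b ≠ 0 and 2√(a² + ‖b‖⁴) ≥ c; and h(a,b,c) = -(b/(2‖b‖²))·(2a + c) otherwise. Then for all a ∈ ℝ, b ∈ ℝᵏ, c ∈ ℝ, the quantity a + ⟨b, h(a,b,c)⟩ equals: a, if b = 0; -√(a² + ‖b‖⁴), if b ≠ 0 and 2√(a² + ‖b‖⁴) ≥ c; and -c/2 otherwise. -/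
open scoped Classical

open RealInnerProductSpace

noncomputable def sontagFeedback (k : ℕ) (a : ℝ) (b : EuclideanSpace ℝ (Fin k)) (c : ℝ) :
    EuclideanSpace ℝ (Fin k) :=
  if b = 0 then 0
  else if 2 * Real.sqrt (a ^ 2 + ‖b‖ ^ 4) ≥ c then
    (-(a + Real.sqrt (a ^ 2 + ‖b‖ ^ 4)) / ‖b‖ ^ 2) • b
  else (-(2 * a + c) / (2 * ‖b‖ ^ 2)) • b

theorem sontag_feedback_value (k : ℕ) (hk : 1 ≤ k)
    (a : ℝ) (b : EuclideanSpace ℝ (Fin k)) (c : ℝ) :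
    a + ⟪b, sontagFeedback k a b c⟫ =
      if b = 0 then a
      else if 2 * Real.sqrt (a ^ 2 + ‖b‖ ^ 4) ≥ c then
        -Real.sqrt (a ^ 2 + ‖b‖ ^ 4)
      else -c / 2 := by
  unfold sontagFeedback
  by_cases hb : b = 0
  · simp [hb]
  · have hb' : ‖b‖ ≠ 0 := norm_ne_zero_iff.mpr hb
    simp only [hb, if_false]
    split_ifs with h <;>
      rw [real_inner_smul_right, real_inner_self_eq_norm_sq] <;> field_simp <;> ring
end

section
/- Let k ≥ 1 and let h : ℝ × ℝᵏ × ℝ → ℝᵏ be the Sontag-type feedback defined by: h(a,b,c) = 0 if b = 0; h(a,b,c) = -(b/‖b‖²)·(a + √(a² + ‖b‖⁴)) if b ≠ 0 and 2√(a² + ‖b‖⁴) ≥ c; and h(a,b,c) = -(b/(2‖b‖²))·(2a + c) otherwise. If a ∈ ℝ, b ∈ ℝᵏ, c ∈ ℝ satisfy c ≥ 0 and the control-Lyapunov-function condition (b = 0 → a ≤ -c), then a + ⟨b, h(a,b,c)⟩ ≤ -c/2. -/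
open scoped Classical

open RealInnerProductSpace

theorem sontag_feedback_decrease (k : ℕ) (hk : 1 ≤ k)
    (a : ℝ) (b : EuclideanSpace ℝ (Fin k)) (c : ℝ)
    (hc : 0 ≤ c) (hclf : b = 0 → a ≤ -c) :
    a + ⟪b, sontagFeedback k a b c⟫ ≤ -c / 2 := by
  unfold sontagFeedback
  by_cases hb : b = 0
  · simp [hb]
    linarith [hclf hb]
  · have hb' : ‖b‖ ≠ 0 := norm_ne_zero_iff.mpr hb
    have hbn : (0:ℝ) < ‖b‖ ^ 2 := by positivity
    have hself : ⟪b, b⟫ = ‖b‖ ^ 2 := real_inner_self_eq_norm_sq b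
    by_cases hcase : 2 * Real.sqrt (a ^ 2 + ‖b‖ ^ 4) ≥ c
    · simp only [if_neg hb, if_pos hcase, real_inner_smul_right, hself]
      rw [div_mul_cancel₀ _ (ne_of_gt hbn)]
      linarith
    · simp only [if_neg hb, if_neg hcase, real_inner_smul_right, hself]
      have : -(2 * a + c) / (2 * ‖b‖ ^ 2) * ‖b‖ ^ 2 = -(2 * a + c) / 2 := by
        field_simp
      rw [this]; ring_nf; linarith
end

section
/- Let k ≥ 1, a ∈ ℝ with a < 0, and b ∈ ℝᵏ with b ≠ 0. Then the vector -(b/‖b‖²)·(a + √(a² + ‖b‖⁴)) has norm at most ‖b‖³ / (2|a|). -/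
theorem sontag_feedback_bound (k : ℕ) (hk : 1 ≤ k)
    (a : ℝ) (ha : a < 0) (b : EuclideanSpace ℝ (Fin k)) (hb : b ≠ 0) :
    ‖(-(a + Real.sqrt (a ^ 2 + ‖b‖ ^ 4)) / ‖b‖ ^ 2) • b‖ ≤ ‖b‖ ^ 3 / (2 * |a|) := by
  have hbpos : 0 < ‖b‖ := norm_pos_iff.mpr hb
  set s := Real.sqrt (a ^ 2 + ‖b‖ ^ 4) with hs
  have hb4 : 0 < ‖b‖ ^ 4 := by positivity
  have hsq : s ^ 2 = a ^ 2 + ‖b‖ ^ 4 := Real.sq_sqrt (by positivity)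
  have hsa : -a ≤ s := by
    have : -a = Real.sqrt (a ^ 2) := by
      rw [Real.sqrt_sq_eq_abs, abs_of_neg ha]
    rw [this]
    exact Real.sqrt_le_sqrt (by linarith)
  have hpos : 0 ≤ a + s := by linarith
  have hprod : (a + s) * (s - a) = ‖b‖ ^ 4 := by nlinarith
  have habs : |a| = -a := abs_of_neg ha
  have hkey : a + s ≤ ‖b‖ ^ 4 / (2 * |a|) := by
    rw [habs, le_div_iff₀ (by linarith)]
    nlinarith
  rw [norm_smul, Real.norm_eq_abs, abs_div, abs_neg, abs_of_nonneg hpos,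
    abs_of_nonneg (by positivity : (0:ℝ) ≤ ‖b‖ ^ 2)]
  rw [div_mul_eq_mul_div, div_le_div_iff₀ (by positivity) (by rw [habs]; linarith)]
  calc (a + s) * ‖b‖ * (2 * |a|) ≤ ‖b‖ ^ 4 / (2 * |a|) * ‖b‖ * (2 * |a|) := by
        have h2a : 0 < 2 * |a| := by rw [habs]; linarith
        nlinarith [mul_le_mul_of_nonneg_right hkey (le_of_lt hbpos)]
    _ = ‖b‖ ^ 3 * ‖b‖ ^ 2 := by
        have ha' : |a| ≠ 0 := by rw [habs]; linarith
        field_simp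
end

section
/- Let k₁ > 0, k₂ > 0, and λ ∈ ℝ, set C = k₁² + k₂² + k₂, and assume k₁² + k₁·C·λ² < (k₂+1)·C. Define a(x₁, x₃) = (k₁·x₃ + (k₂+1)·x₁)·x₃ + C·λ²·x₃² and b(x₁, x₃) = C·x₃ + k₁·x₁. Then there exists γ > 0 such that for all x₁, x₃ ∈ ℝ with b(x₁, x₃) = 0, one has a(x₁, x₃) ≤ -γ·(x₁² + x₃²). -/
theorem pendulum_clf_condition (k₁ k₂ lam : ℝ) (hk₁ : 0 < k₁) (hk₂ : 0 < k₂)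
    (C : ℝ) (hC : C = k₁ ^ 2 + k₂ ^ 2 + k₂)
    (hcond : k₁ ^ 2 + k₁ * C * lam ^ 2 < (k₂ + 1) * C)
    (a b : ℝ → ℝ → ℝ)
    (ha : ∀ x₁ x₃, a x₁ x₃ = (k₁ * x₃ + (k₂ + 1) * x₁) * x₃ + C * lam ^ 2 * x₃ ^ 2)
    (hb : ∀ x₁ x₃, b x₁ x₃ = C * x₃ + k₁ * x₁) :
    ∃ γ : ℝ, 0 < γ ∧ ∀ x₁ x₃ : ℝ, b x₁ x₃ = 0 → a x₁ x₃ ≤ -γ * (x₁ ^ 2 + x₃ ^ 2) := by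
  have hnum : 0 < (k₂ + 1) * C - k₁ ^ 2 - k₁ * C * lam ^ 2 := by linarith
  have hden : 0 < C ^ 2 + k₁ ^ 2 := by positivity
  refine ⟨k₁ * ((k₂ + 1) * C - k₁ ^ 2 - k₁ * C * lam ^ 2) / (C ^ 2 + k₁ ^ 2), ?_, ?_⟩
  · positivity
  · intro x₁ x₃ h0
    rw [hb] at h0
    rw [ha]
    have hx : x₁ = -C * x₃ / k₁ := by
      field_simp
      linarith
    subst hx
    apply le_of_eq
    have hk₁' : k₁ ≠ 0 := ne_of_gt hk₁
    have hden' : C ^ 2 + k₁ ^ 2 ≠ 0 := ne_of_gt hden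
    field_simp
    ring
end
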